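/- arXiv:2506.04080 — 5 statements merged into one kernel-verified Lean document; each statement's English description precedes it below -/
import Mathlib

section
/- Let α_1,…,α_n be pairwise distinct elements of a finite field F_q, and let k, r be integers with 6 ≤ 2k ≤ n and 1 ≤ r ≤ k−1. Then every k×k submatrix of G_{r,k} is nonsingular (equivalently, the code C_{r,k} spanned by the rows of G_{r,k} is an [n,k] MDS code) if and only if σ_r(α_{i_1},…,α_{i_k}) ≠ 0 for every k-element subset {i_1,…,i_k} of {1,…,n}. -/
open Finset Matrix

/-- Elementary symmetric polynomial `σ_t` evaluated at the values `x 0, …, x (m-1)`. -/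
def esymmV {F : Type*} [CommRing F] {m : ℕ} (t : ℕ) (x : Fin m → F) : F :=
  ∑ A ∈ Finset.univ.powersetCard t, ∏ i ∈ A, x i

/-- Complete homogeneous symmetric polynomial `S_t` evaluated at `x 0, …, x (m-1)`. -/
def hsymmV {F : Type*} [CommRing F] {m : ℕ} (t : ℕ) (x : Fin m → F) : F :=
  ∑ d ∈ Finset.Nat.antidiagonalTuple m t, ∏ i, x i ^ d i

/-- The exponent of the `i`-th row (0-indexed): the elements of
`{0,…,k−r−1} ∪ {k−r+1,…,k}` in increasing order. -/
def expo (k r : ℕ) (i : Fin k) : ℕ := if (i : ℕ) < k - r then (i : ℕ) else (i : ℕ) + 1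

/-- The Vandermonde product `∏_{i<j} (α_j − α_i)`. -/
def vand {F : Type*} [CommRing F] {n : ℕ} (α : Fin n → F) : F :=
  ∏ i : Fin n, ∏ j ∈ Finset.Ioi i, (α j - α i)

/-- The matrix `G_{r,k}`: rows are `(α_1^e, …, α_n^e)` for
`e ∈ {0,…,k−r−1} ∪ {k−r+1,…,k}` in increasing order. -/
def Grk {F : Type*} [Field F] {n : ℕ} (α : Fin n → F) (k r : ℕ) : Matrix (Fin k) (Fin n) F :=
  Matrix.of fun i j => α j ^ expo k r i

/-- The matrix `G_1`: `G_{r,k}` with the extra column `(0,…,0,1)ᵀ` appended. -/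
def G1 {F : Type*} [Field F] {n : ℕ} (α : Fin n → F) (k r : ℕ) :
    Matrix (Fin k) (Fin (n + 1)) F :=
  Matrix.of fun i j =>
    if hj : (j : ℕ) < n then α ⟨j, hj⟩ ^ expo k r i
    else if (i : ℕ) = k - 1 then 1 else 0

/-- The matrix `G_2`: `G_1` with the extra column `(0,…,0,1,δ)ᵀ` appended
(entry `1` in row `k−1`, i.e. index `k−2`, and `δ` in row `k`, i.e. index `k−1`). -/
def G2 {F : Type*} [Field F] {n : ℕ} (α : Fin n → F) (k r : ℕ) (δ : F) :
    Matrix (Fin k) (Fin (n + 2)) F :=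
  Matrix.of fun i j =>
    if hj : (j : ℕ) < n then α ⟨j, hj⟩ ^ expo k r i
    else if (j : ℕ) = n then (if (i : ℕ) = k - 1 then 1 else 0)
    else (if (i : ℕ) = k - 2 then 1 else if (i : ℕ) = k - 1 then δ else 0)

/-- `u_i = ∏_{j ≠ i} (α_i − α_j)⁻¹`. -/
def uCoef {F : Type*} [Field F] {n : ℕ} (α : Fin n → F) (i : Fin n) : F :=
  ∏ j ∈ Finset.univ.erase i, (α i - α j)⁻¹

/-- `Λ_{r,i} = ∑_{j=0}^{r} (−1)^j σ_j α_i^{(n−k)+(r−1)−j}`. -/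
def Lam {F : Type*} [Field F] {n : ℕ} (α : Fin n → F) (k r : ℕ) (i : Fin n) : F :=
  ∑ j ∈ Finset.range (r + 1), (-1 : F) ^ j * esymmV j α * α i ^ ((n - k) + (r - 1) - j)

/-- Every `k×k` submatrix of `G` is nonsingular. -/
def allSubNonsing {F : Type*} [Field F] {k m : ℕ} (G : Matrix (Fin k) (Fin m) F) : Prop :=
  ∀ c : Fin k → Fin m, Function.Injective c → (G.submatrix id c).det ≠ 0

/-- The linear code spanned by the rows of `G`. -/
def rowSpan {F : Type*} [Field F] {k m : ℕ} (G : Matrix (Fin k) (Fin m) F) :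
    Submodule F (Fin m → F) :=
  Submodule.span F (Set.range fun i => G i)

/-- The dual code `C^⊥ = {x : ∑ x_i c_i = 0 for all c ∈ C}`, as a set. -/
def dualSet {F : Type*} [Field F] {m : ℕ} (C : Set (Fin m → F)) : Set (Fin m → F) :=
  {x | ∀ c ∈ C, ∑ i, x i * c i = 0}

/-- The extended code of `C` with respect to `w`. -/
def extCode {F : Type*} [Field F] {m : ℕ} (C : Set (Fin m → F)) (w : Fin m → F) :
    Set (Fin (m + 1) → F) :=
  {y | ∃ c ∈ C, (∀ i : Fin m, y (Fin.castSucc i) = c i) ∧ y (Fin.last m) = ∑ i, w i * c i}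

lemma coeff_term_aux {F : Type*} [Field F] (m j t : ℕ) (d : F) :
    ((-1 : Polynomial F) ^ m * Polynomial.X ^ j * Polynomial.C d).coeff t =
      (-1 : F) ^ m * d * (if t = j then 1 else 0) := by
  have h : (-1 : Polynomial F) ^ m * Polynomial.X ^ j * Polynomial.C d =
      Polynomial.C ((-1 : F) ^ m * d) * Polynomial.X ^ j := by
    rw [Polynomial.C_mul, Polynomial.C_pow, Polynomial.C_neg, Polynomial.C_1]; ring
  rw [h, Polynomial.coeff_C_mul, Polynomial.coeff_X_pow]
  try ring

lemma det_expo_eq {F : Type*} [Field F] {k r : ℕ} (hr : r ≤ k) (x : Fin k → F) :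
    (Matrix.of fun i j : Fin k => x j ^ expo k r i).det = esymmV r x * vand x := by
  set v : Fin (k+1) → Polynomial F := Fin.cons Polynomial.X (fun i => Polynomial.C (x i)) with hv
  have hdet := Matrix.det_vandermonde v
  have hrhs : (∏ i : Fin (k+1), ∏ j ∈ Finset.Ioi i, (v j - v i)) =
      (∏ j : Fin k, (Polynomial.C (x j) - Polynomial.X)) * Polynomial.C (vand x) := by
    rw [Fin.prod_univ_succ]
    congr 1
    · rw [Fin.prod_Ioi_zero]
      simp [hv]
    · rw [vand, map_prod]
      refine Finset.prod_congr rfl fun i _ => ?_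
      rw [Fin.prod_Ioi_succ, map_prod]
      refine Finset.prod_congr rfl fun j _ => ?_
      simp [hv]
  set D : F := (Matrix.of fun i j : Fin k => x j ^ expo k r i).det with hD
  have hkr : k - r < k + 1 := by omega
  set p : Fin (k+1) := ⟨k - r, hkr⟩ with hp
  have hminor : ∀ j : Fin (k+1),
      ((Matrix.vandermonde v).submatrix Fin.succ j.succAbove).det =
        Polynomial.C ((Matrix.of fun i' j' : Fin k => x i' ^ (j.succAbove j' : ℕ)).det) := by
    intro j
    rw [RingHom.map_det]
    congr 1
    ext i' j'
    simp [Matrix.vandermonde, hv, map_pow]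
  have hdp : (Matrix.of fun i' j' : Fin k => x i' ^ (p.succAbove j' : ℕ)).det = D := by
    rw [hD, ← Matrix.det_transpose]
    congr 1
    ext i' j'
    simp only [Matrix.transpose_apply, Matrix.of_apply]
    congr 1
    rw [expo]
    rcases lt_or_ge (i' : ℕ) (k - r) with h | h
    · rw [if_pos h, Fin.succAbove_of_castSucc_lt _ _ (by simp [Fin.lt_def, hp, h])]
      simp
    · rw [if_neg (not_lt.mpr h),
        Fin.succAbove_of_le_castSucc _ _ (by simp [Fin.le_def, hp, h])]
      simp
  have hlhs : (Matrix.vandermonde v).det.coeff (k - r) = (-1 : F) ^ (k - r) * D := by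
    rw [Matrix.det_succ_row_zero, Polynomial.finset_sum_coeff]
    rw [Finset.sum_eq_single p]
    · have h0 : Matrix.vandermonde v 0 p = Polynomial.X ^ (k - r) := by
        simp [Matrix.vandermonde, hv, hp]
      rw [hminor, h0, hdp, coeff_term_aux, if_pos rfl, mul_one, hp]
    · intro j _ hj
      have h0 : Matrix.vandermonde v 0 j = Polynomial.X ^ (j : ℕ) := by
        simp [Matrix.vandermonde, hv]
      rw [hminor, h0, coeff_term_aux, if_neg, mul_zero]
      intro h
      exact hj (Fin.ext (by simp [hp, ← h]))
    · intro h
      exact absurd (Finset.mem_univ p) h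
  have hprod : (∏ j : Fin k, (Polynomial.C (x j) - Polynomial.X)) =
      (-1 : Polynomial F) ^ k * ∏ j : Fin k, (Polynomial.X - Polynomial.C (x j)) := by
    have hc : ((-1 : Polynomial F)) ^ k = ∏ _j : Fin k, (-1 : Polynomial F) := by
      rw [Finset.prod_const]; simp
    rw [hc, ← Finset.prod_mul_distrib]
    refine Finset.prod_congr rfl fun j _ => by ring
  have hcoeffprod : (∏ j : Fin k, (Polynomial.X - Polynomial.C (x j))).coeff (k - r) =
      (-1 : F) ^ r * esymmV r x := by
    have hcard : Multiset.card (Finset.univ.val.map x) = k := by simp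
    have hh := Multiset.prod_X_sub_C_coeff (Finset.univ.val.map x)
      (k := k - r) (by rw [hcard]; omega)
    rw [Multiset.map_map] at hh
    have heq : (∏ j : Fin k, (Polynomial.X - Polynomial.C (x j))) =
        (Finset.univ.val.map fun j : Fin k => Polynomial.X - Polynomial.C (x j)).prod := rfl
    rw [heq, show ((fun t => Polynomial.X - Polynomial.C t) ∘ x) =
      (fun j : Fin k => Polynomial.X - Polynomial.C (x j)) from rfl] at *
    rw [hh, hcard, show k - (k - r) = r from by omega, Finset.esymm_map_val, esymmV]
  have hrhsc : ((∏ j : Fin k, (Polynomial.C (x j) - Polynomial.X)) *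
      Polynomial.C (vand x)).coeff (k - r) =
      (-1 : F) ^ k * ((-1 : F) ^ r * esymmV r x) * vand x := by
    rw [hprod, show ((-1 : Polynomial F) ^ k) = Polynomial.C ((-1 : F) ^ k) from by simp,
      mul_comm (Polynomial.C ((-1 : F) ^ k) * _) (Polynomial.C (vand x)), ← mul_assoc,
      ← _root_.map_mul, mul_assoc, Polynomial.coeff_C_mul, hcoeffprod]
    ring
  rw [hdet, hrhs, hrhsc] at hlhs
  have h2 : (-1 : F) ^ r * (-1) ^ r = 1 := by
    rw [← pow_add]; exact Even.neg_one_pow ⟨r, rfl⟩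
  have h3 : (-1 : F) ^ k = (-1 : F) ^ (k - r) * (-1) ^ r := by
    rw [← pow_add]; congr 1; omega
  apply mul_left_cancel₀ (pow_ne_zero (k - r) (by norm_num : (-1 : F) ≠ 0))
  rw [← hlhs, h3]
  linear_combination ((-1 : F) ^ (k - r) * esymmV r x * vand x) * h2

/-- Theorem 3.2: `C_{r,k}` is MDS (every `k×k` submatrix of `G_{r,k}` is nonsingular)
iff `σ_r(α_{i_1},…,α_{i_k}) ≠ 0` for every `k`-element subset of `{α_1,…,α_n}`. -/
theorem Crk_MDS_iff {F : Type*} [Field F] [Fintype F] {n : ℕ}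
    (α : Fin n → F) (hα : Function.Injective α) (k r : ℕ)
    (h6 : 6 ≤ 2 * k) (hkn : 2 * k ≤ n) (hr1 : 1 ≤ r) (hrk : r ≤ k - 1) :
    allSubNonsing (Grk α k r) ↔
      ∀ c : Fin k → Fin n, Function.Injective c → esymmV r (α ∘ c) ≠ 0 := by
  have hrk' : r ≤ k := le_trans hrk (Nat.sub_le k 1)
  have hdet : ∀ c : Fin k → Fin n,
      ((Grk α k r).submatrix id c).det = esymmV r (α ∘ c) * vand (α ∘ c) := by
    intro c
    exact det_expo_eq hrk' (α ∘ c)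
  constructor
  · intro hA c hc he
    exact hA c hc (by rw [hdet, he, zero_mul])
  · intro hs c hc
    rw [hdet]
    have hv : vand (α ∘ c) ≠ 0 := by
      rw [vand]
      refine Finset.prod_ne_zero_iff.mpr fun i _ => Finset.prod_ne_zero_iff.mpr fun j hj => ?_
      refine sub_ne_zero.mpr fun h => ?_
      exact absurd (hc (hα h)) (ne_of_gt (Finset.mem_Ioi.mp hj))
    exact mul_ne_zero (hs c hc) hv
end

section
/- Let α_1,…,α_n be pairwise distinct elements of a finite field F_q and let k, r be integers with 6 ≤ 2k ≤ n and 1 ≤ r ≤ k−1. Then G_{r,k} · H_{r,k}ᵀ = 0 and the rows of H_{r,k} are linearly independent over F_q; consequently H_{r,k} is a parity check matrix for the code C_{r,k}, i.e. the rows of H_{r,k} form a basis of the dual code C_{r,k}^⊥. -/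
open Finset Matrix

/-- The parity check matrix `H_{r,k}`: the first `n−k−1` rows are
`(u_1 α_1^e, …, u_n α_n^e)` for `e = 0,…,n−k−2` and the last row is
`(u_1 Λ_{r,1}, …, u_n Λ_{r,n})`. -/
def Hrk {F : Type*} [Field F] {n : ℕ} (α : Fin n → F) (k r : ℕ) :
    Matrix (Fin (n - k)) (Fin n) F :=
  Matrix.of fun i j =>
    if (i : ℕ) < n - k - 1 then uCoef α j * α j ^ (i : ℕ)
    else uCoef α j * Lam α k r j

/-- The parity check matrix `H_1`. -/
def H1 {F : Type*} [Field F] {n : ℕ} (α : Fin n → F) (k r : ℕ) :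
    Matrix (Fin (n - k + 1)) (Fin (n + 1)) F :=
  Matrix.of fun i j =>
    if hj : (j : ℕ) < n then
      (if (i : ℕ) < n - k - 1 then uCoef α ⟨j, hj⟩ * α ⟨j, hj⟩ ^ (i : ℕ)
       else if (i : ℕ) = n - k - 1 then uCoef α ⟨j, hj⟩ * Lam α k r ⟨j, hj⟩
       else uCoef α ⟨j, hj⟩ * α ⟨j, hj⟩ ^ (n - k - 1))
    else (if (i : ℕ) = n - k then -1 else 0)

/-- The parity check matrix `H_2` (case `2 ≤ r`), with parameter `b`. -/
def H2 {F : Type*} [Field F] {n : ℕ} (α : Fin n → F) (k r : ℕ) (b : F) :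
    Matrix (Fin (n - k + 2)) (Fin (n + 2)) F :=
  Matrix.of fun i j =>
    if hj : (j : ℕ) < n then
      (if (i : ℕ) < n - k - 1 then uCoef α ⟨j, hj⟩ * α ⟨j, hj⟩ ^ (i : ℕ)
       else if (i : ℕ) = n - k - 1 then uCoef α ⟨j, hj⟩ * Lam α k r ⟨j, hj⟩
       else if (i : ℕ) = n - k then uCoef α ⟨j, hj⟩ * α ⟨j, hj⟩ ^ (n - k - 1)
       else uCoef α ⟨j, hj⟩ * α ⟨j, hj⟩ ^ (n - k))
    else if (j : ℕ) = n then
      (if (i : ℕ) = n - k then -1 else if (i : ℕ) = n - k + 1 then b else 0)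
    else (if (i : ℕ) = n - k + 1 then -1 else 0)

/-!
Write `L(P) = ∑ⱼ uⱼ P(αⱼ)`. Lagrange interpolation gives `L(P) = coeff P (n - 1)` when
`deg P < n`, so `L` kills all polynomials of degree `< n - 1` and all multiples of
`N = ∏ⱼ (X - αⱼ)`. The rows of `H_{r,k}` are `(uⱼ P(αⱼ))ⱼ` for `P = X^e` (`e < n - k - 1`) and
`P = X^(n-k-1) T`, where `T` is the monic polynomial of degree `r` formed by the top `r + 1`
coefficients of `N`; indeed `Λ_{r,j} = αⱼ^(n-k-1) T(αⱼ)`. An entry of `G_{r,k} H_{r,k}ᵀ` is thus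
`L(X^m)` with `m < n - 1`, or `L(X^m T)` with `m < n`. If `m + r < n - 1` the latter has small
degree; if `m + r ≥ n` then `X^m T ≡ X^(m+r-n) N` up to degree `< n - 1`. The only remaining
exponent `m = n - 1 - r` would come from the row `X^(k-r)`, which is exactly the one missing
from `G_{r,k}`.

The rows of both matrices are evaluations of polynomials of distinct degrees `< n` at distinct
points, hence independent, and `k + (n - k) = n` makes the row space of `H_{r,k}` the whole dual.
-/

open Polynomial

theorem Polynomial.linearIndependent_of_natDegree_injective {R ι : Type*} [CommRing R]
    [IsDomain R] {p : ι → R[X]} (hp : ∀ i, p i ≠ 0)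
    (hdeg : Function.Injective fun i => (p i).natDegree) : LinearIndependent R p := by
  classical
  refine linearIndependent_iff'.mpr fun s g hsum i hi => by_contra fun hgi => ?_
  obtain ⟨j, hj, hmax⟩ := (s.filter (g · ≠ 0)).exists_max_image (fun i => (p i).natDegree)
    ⟨i, mem_filter.2 ⟨hi, hgi⟩⟩
  rw [mem_filter] at hj
  -- the top coefficient of the summand of largest degree cannot be cancelled
  have htop := congrArg (coeff · (p j).natDegree) hsum
  simp only [finsetSum_coeff, coeff_smul, smul_eq_mul, coeff_zero] at htop
  rw [Finset.sum_eq_single_of_mem j hj.1 fun l hl hlj => ?_] at htop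
  · exact mul_ne_zero hj.2 (leadingCoeff_ne_zero.2 (hp j)) htop
  by_cases hgl : g l = 0
  · rw [hgl, zero_mul]
  · have hlt : (p l).natDegree < (p j).natDegree :=
      (hmax l (mem_filter.2 ⟨hl, hgl⟩)).lt_of_ne fun h => hlj (hdeg h)
    rw [coeff_eq_zero_of_natDegree_lt hlt, mul_zero]

theorem linearIndependent_mul_eval {K ι κ : Type*} [Field K] [Fintype κ] {v : κ → K}
    (hv : Function.Injective v) {w : κ → K} (hw : ∀ j, w j ≠ 0) {p : ι → K[X]}
    (hp : LinearIndependent K p) (hdeg : ∀ i, (p i).degree < Fintype.card κ) :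
    LinearIndependent K fun i j => w j * (p i).eval (v j) := by
  let E : K[X] →ₗ[K] κ → K := LinearMap.pi fun j => w j • leval (v j)
  refine hp.map (f := E) (Submodule.disjoint_def.2 fun f hf hEf => ?_)
  have hfdeg : f.degree < Fintype.card κ := mem_degreeLT.1 <|
    Submodule.span_le.2 (Set.range_subset_iff.2 fun i => mem_degreeLT.2 (hdeg i)) hf
  refine eq_zero_of_degree_lt_of_eval_index_eq_zero (s := univ) hv.injOn (by simpa) fun j _ => ?_
  have hEfj := congrFun (LinearMap.mem_ker.1 hEf) j
  simpa [E, hw j] using hEfj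

theorem dualSet_rowSpan {K : Type*} [Field K] {k m : ℕ} (G : Matrix (Fin k) (Fin m) K) :
    dualSet (rowSpan G : Set (Fin m → K)) = LinearMap.ker G.mulVecLin := by
  ext x
  change rowSpan G ≤ LinearMap.ker (dotProductEquiv K (Fin m) x) ↔ _
  rw [rowSpan, Submodule.span_le, Set.range_subset_iff, SetLike.mem_coe, LinearMap.mem_ker,
    Matrix.mulVecLin_apply, funext_iff]
  simp [Matrix.mulVec, dotProduct_comm]

theorem rowSpan_eq_dualSet_rowSpan {K : Type*} [Field K] {k l m : ℕ}
    {G : Matrix (Fin k) (Fin m) K} {H : Matrix (Fin l) (Fin m) K} (hGH : G * Hᵀ = 0)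
    (hG : LinearIndependent K fun i => G i) (hH : LinearIndependent K fun i => H i)
    (hm : k + l = m) :
    (rowSpan H : Set (Fin m → K)) = dualSet (rowSpan G : Set (Fin m → K)) := by
  rw [dualSet_rowSpan, SetLike.coe_set_eq]
  refine Submodule.eq_of_le_of_finrank_eq ?_ ?_
  · refine Submodule.span_le.2 (Set.range_subset_iff.2 fun b => funext fun a => ?_)
    simpa [Matrix.mul_apply, Matrix.mulVec, dotProduct] using congrFun (congrFun hGH a) b
  · have hdim := LinearMap.finrank_range_add_finrank_ker G.mulVecLin
    have hrank : G.rank = k := by simpa using hG.rank_matrix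
    rw [Matrix.rank] at hrank
    rw [rowSpan, finrank_span_eq_card hH]
    simp only [Module.finrank_fintype_fun_eq_card, Fintype.card_fin] at hdim ⊢
    omega

theorem expo_le (k r : ℕ) (i : Fin k) : expo k r i ≤ k := by
  unfold expo; split_ifs <;> omega

theorem expo_ne_sub (k r : ℕ) (i : Fin k) : expo k r i ≠ k - r := by
  unfold expo; split_ifs <;> omega

theorem expo_injective (k r : ℕ) : Function.Injective (expo k r) := fun i j h => by
  unfold expo at h; ext; split_ifs at h <;> omega

section NodalWeights

variable {F : Type*} [Field F] {n : ℕ} (α : Fin n → F)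

theorem sum_uCoef_mul_eval (hα : Function.Injective α) {P : F[X]} (hP : P.degree < n) :
    ∑ j, uCoef α j * P.eval (α j) = P.coeff (n - 1) := by
  have h := Lagrange.coeff_eq_sum (s := univ) hα.injOn (P := P) (by simpa using hP)
  rw [card_univ, Fintype.card_fin] at h
  rw [h]
  refine sum_congr rfl fun j _ => ?_
  rw [uCoef, prod_inv_distrib, div_eq_mul_inv, mul_comm]

theorem sum_uCoef_mul_eval_eq_zero (hα : Function.Injective α) {P : F[X]}
    (hP : P.natDegree < n - 1) : ∑ j, uCoef α j * P.eval (α j) = 0 := by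
  have hdeg : P.degree < n :=
    P.degree_le_natDegree.trans_lt (by exact_mod_cast hP.trans_le (n.sub_le 1))
  rw [sum_uCoef_mul_eval α hα hdeg, coeff_eq_zero_of_natDegree_lt hP]

/-- The top `r + 1` coefficients of `nodal univ α = ∏ (X - α j)`, shifted down to degree `r`. -/
noncomputable def nodalHead (r : ℕ) : F[X] :=
  ∑ t ∈ range (r + 1), C ((-1) ^ t * esymmV t α) * X ^ (r - t)

theorem natDegree_nodalHead_le (r : ℕ) : (nodalHead α r).natDegree ≤ r :=
  natDegree_sum_le_of_forall_le _ _ fun t _ => (natDegree_C_mul_X_pow_le _ _).trans (r.sub_le t)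

theorem coeff_nodalHead_self (r : ℕ) : (nodalHead α r).coeff r = 1 := by
  rw [nodalHead, finsetSum_coeff, sum_eq_single_of_mem 0 (by simp) fun t ht ht0 => ?_]
  · simp [esymmV]
  · rw [coeff_C_mul_X_pow, if_neg (by grind)]

theorem nodalHead_monic (r : ℕ) : (nodalHead α r).Monic :=
  monic_of_natDegree_le_of_coeff_eq_one r (natDegree_nodalHead_le α r) (coeff_nodalHead_self α r)

theorem natDegree_nodalHead (r : ℕ) : (nodalHead α r).natDegree = r :=
  natDegree_eq_of_le_of_coeff_ne_zero (natDegree_nodalHead_le α r)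
    (by rw [coeff_nodalHead_self]; exact one_ne_zero)

theorem nodal_eq_sum_esymmV :
    Lagrange.nodal univ α = ∑ t ∈ range (n + 1), C ((-1) ^ t * esymmV t α) * X ^ (n - t) := by
  have h := Multiset.prod_X_sub_X_eq_sum_esymm (univ.val.map α)
  simp only [Multiset.map_map, Function.comp_def, Multiset.card_map, card_val, card_univ,
    Fintype.card_fin] at h
  rw [Lagrange.nodal, prod_eq_multiset_prod, h]
  refine sum_congr rfl fun t _ => ?_
  rw [esymmV, ← Finset.esymm_map_val, C_mul, C_pow, C_neg, C_1, mul_assoc]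

theorem natDegree_nodal_sub_X_pow_mul_nodalHead_lt {r : ℕ} (hr : r < n) :
    (Lagrange.nodal univ α - X ^ (n - r) * nodalHead α r).natDegree < n - r := by
  have hhead : X ^ (n - r) * nodalHead α r =
      ∑ t ∈ range (r + 1), C ((-1) ^ t * esymmV t α) * X ^ (n - t) := by
    rw [nodalHead, mul_sum]
    refine sum_congr rfl fun t ht => ?_
    rw [mem_range] at ht
    rw [mul_left_comm, ← pow_add, Nat.sub_add_sub_cancel hr.le (by omega)]
  rw [hhead, nodal_eq_sum_esymmV, ← sum_range_add_sum_Ico _ (by omega : r + 1 ≤ n + 1),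
    add_sub_cancel_left]
  refine (natDegree_sum_le_of_forall_le _ _ fun t ht => ?_).trans_lt
    (by omega : n - r - 1 < n - r)
  rw [mem_Ico] at ht
  exact (natDegree_C_mul_X_pow_le _ _).trans (by omega)

theorem sum_uCoef_mul_eval_X_pow_mul_nodalHead (hα : Function.Injective α) {r m : ℕ}
    (hr : r < n) (hm : m < n) (hmr : m + r + 1 ≠ n) :
    ∑ j, uCoef α j * (X ^ m * nodalHead α r).eval (α j) = 0 := by
  rcases lt_or_ge (m + r + 1) n with hlow | hhigh
  · refine sum_uCoef_mul_eval_eq_zero α hα ?_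
    rw [(monic_X_pow m).natDegree_mul (nodalHead_monic α r), natDegree_X_pow,
      natDegree_nodalHead]
    omega
  set R := Lagrange.nodal univ α - X ^ (n - r) * nodalHead α r
  have hm' : X ^ m * nodalHead α r =
      X ^ (m + r - n) * Lagrange.nodal univ α - X ^ (m + r - n) * R := by
    rw [mul_sub, sub_sub_cancel, ← mul_assoc, ← pow_add, Nat.sub_add_sub_cancel (by omega) hr.le]
    congr 2; omega
  have hR : (X ^ (m + r - n) * R).natDegree < n - 1 := by
    have : R.natDegree < n - r := natDegree_nodal_sub_X_pow_mul_nodalHead_lt α hr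
    refine (natDegree_mul_le).trans_lt ?_
    rw [natDegree_X_pow]; omega
  rw [← sum_uCoef_mul_eval_eq_zero α hα (P := -(X ^ (m + r - n) * R))
    (by rwa [natDegree_neg])]
  refine sum_congr rfl fun j _ => ?_
  rw [hm', eval_sub, eval_mul (p := X ^ _) (q := Lagrange.nodal _ _),
    Lagrange.eval_nodal_at_node (mem_univ j)]
  simp

end NodalWeights

section ParityCheck

variable {F : Type*} [Field F] {n : ℕ} {α : Fin n → F} {k r : ℕ}

theorem uCoef_ne_zero (hα : Function.Injective α) (j : Fin n) : uCoef α j ≠ 0 :=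
  prod_ne_zero_iff.2 fun _ hi => inv_ne_zero (sub_ne_zero.2 (hα.ne (ne_of_mem_erase hi).symm))

variable (α k r) in
noncomputable def hrkPoly (i : Fin (n - k)) : F[X] :=
  if (i : ℕ) < n - k - 1 then X ^ (i : ℕ) else X ^ (n - k - 1) * nodalHead α r

theorem Lam_eq_mul_eval_nodalHead (hr : 1 ≤ r) (hk : k < n) (j : Fin n) :
    Lam α k r j = α j ^ (n - k - 1) * (nodalHead α r).eval (α j) := by
  rw [Lam, nodalHead, eval_finsetSum, mul_sum]
  refine sum_congr rfl fun t ht => ?_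
  rw [eval_mul, eval_C, eval_pow, eval_X, mul_left_comm, ← pow_add]
  rw [mem_range] at ht
  congr 2
  omega

theorem Hrk_apply (hr : 1 ≤ r) (hk : k < n) (i : Fin (n - k)) (j : Fin n) :
    Hrk α k r i j = uCoef α j * (hrkPoly α k r i).eval (α j) := by
  rw [Hrk, hrkPoly, of_apply]
  split_ifs <;> simp [Lam_eq_mul_eval_nodalHead hr hk]

theorem hrkPoly_monic (i : Fin (n - k)) : (hrkPoly α k r i).Monic := by
  unfold hrkPoly; split_ifs
  exacts [monic_X_pow _, (monic_X_pow _).mul (nodalHead_monic α r)]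

theorem natDegree_hrkPoly (i : Fin (n - k)) :
    (hrkPoly α k r i).natDegree = if (i : ℕ) < n - k - 1 then (i : ℕ) else n - k - 1 + r := by
  unfold hrkPoly; split_ifs
  · exact natDegree_X_pow _
  · rw [(monic_X_pow _).natDegree_mul (nodalHead_monic α r), natDegree_X_pow, natDegree_nodalHead]

theorem Grk_mul_Hrk_transpose (hα : Function.Injective α) (hr : 1 ≤ r) (hrk : r < k)
    (hk : k < n) : Grk α k r * (Hrk α k r)ᵀ = 0 := by
  ext a b
  have hentry : (Grk α k r * (Hrk α k r)ᵀ) a b =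
      ∑ j, uCoef α j * (X ^ expo k r a * hrkPoly α k r b).eval (α j) := by
    simp only [mul_apply, transpose_apply, Grk, of_apply, Hrk_apply hr hk, eval_mul, eval_pow,
      eval_X]
    exact sum_congr rfl fun j _ => by ring
  have hexpo := expo_le k r a
  rw [hentry, Matrix.zero_apply, hrkPoly]
  split_ifs with hb
  · exact sum_uCoef_mul_eval_eq_zero α hα (by rw [← pow_add, natDegree_X_pow]; omega)
  · rw [← mul_assoc, ← pow_add]
    have := expo_ne_sub k r a
    exact sum_uCoef_mul_eval_X_pow_mul_nodalHead α hα (by omega) (by omega) (by omega)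

theorem linearIndependent_Grk (hα : Function.Injective α) (hk : k < n) :
    LinearIndependent F fun i => Grk α k r i := by
  have hX : LinearIndependent F fun i => (X ^ expo k r i : F[X]) :=
    linearIndependent_of_natDegree_injective (fun _ => pow_ne_zero _ X_ne_zero)
      (by simpa using expo_injective k r)
  have hdeg (i : Fin k) : (X ^ expo k r i : F[X]).degree < Fintype.card (Fin n) := by
    rw [degree_X_pow, Fintype.card_fin]; exact_mod_cast (expo_le k r i).trans_lt hk
  have hG := linearIndependent_mul_eval hα (fun _ => one_ne_zero) hX hdeg
  simp only [one_mul, eval_pow, eval_X] at hG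
  exact hG

theorem linearIndependent_Hrk (hα : Function.Injective α) (hr : 1 ≤ r) (hrk : r < k)
    (hk : k < n) : LinearIndependent F fun i => Hrk α k r i := by
  have hH : LinearIndependent F (hrkPoly α k r) := by
    refine linearIndependent_of_natDegree_injective (fun i => (hrkPoly_monic i).ne_zero)
      fun i j h => ?_
    simp only [natDegree_hrkPoly] at h
    ext; split_ifs at h <;> omega
  have hdeg (i : Fin (n - k)) : (hrkPoly α k r i).degree < Fintype.card (Fin n) := by
    refine (degree_le_natDegree).trans_lt ?_
    rw [natDegree_hrkPoly, Fintype.card_fin]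
    split_ifs <;> norm_cast <;> omega
  have hrows : (fun i => Hrk α k r i) = fun i j => uCoef α j * (hrkPoly α k r i).eval (α j) :=
    funext fun i => funext (Hrk_apply hr hk i)
  rw [hrows]
  exact linearIndependent_mul_eval hα (uCoef_ne_zero hα) hH hdeg

end ParityCheck

theorem Hrk_parity_check_general {F : Type*} [Field F] {n : ℕ}
    (α : Fin n → F) (hα : Function.Injective α) (k r : ℕ)
    (hkn : 2 * k ≤ n) (hr1 : 1 ≤ r) (hrk : r ≤ k - 1) :
    Grk α k r * (Hrk α k r)ᵀ = 0 ∧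
    LinearIndependent F (fun i => Hrk α k r i) ∧
    (rowSpan (Hrk α k r) : Set (Fin n → F)) = dualSet (rowSpan (Grk α k r) : Set (Fin n → F)) := by
  have hrk' : r < k := by omega
  have hkn' : k < n := by omega
  have hGH := Grk_mul_Hrk_transpose hα hr1 hrk' hkn'
  have hH := linearIndependent_Hrk hα hr1 hrk' hkn'
  exact ⟨hGH, hH, rowSpan_eq_dualSet_rowSpan hGH (linearIndependent_Grk hα hkn') hH (by omega)⟩

/-- Theorem 3.3: `H_{r,k}` is a parity check matrix for `C_{r,k}`. -/
theorem Hrk_parity_check {F : Type*} [Field F] [Fintype F] {n : ℕ}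
    (α : Fin n → F) (hα : Function.Injective α) (k r : ℕ)
    (h6 : 6 ≤ 2 * k) (hkn : 2 * k ≤ n) (hr1 : 1 ≤ r) (hrk : r ≤ k - 1) :
    Grk α k r * (Hrk α k r)ᵀ = 0 ∧
    LinearIndependent F (fun i => Hrk α k r i) ∧
    (rowSpan (Hrk α k r) : Set (Fin n → F)) = dualSet (rowSpan (Grk α k r) : Set (Fin n → F)) :=
  Hrk_parity_check_general α hα k r hkn hr1 hrk
end

section
/- Let α_1,…,α_n be pairwise distinct elements of a finite field F_q and let k, r be integers with 1 ≤ r ≤ k−1 and k+1 ≤ n. Then there exists a nonzero vector w = (w_1,…,w_n) ∈ F_q^n such that G_{r,k} · wᵀ = (0,0,…,0,1)ᵀ ∈ F_q^k; explicitly, one may take w_i = ∏_{1≤j≤k+1, j≠i}(α_i − α_j)^{-1} for 1 ≤ i ≤ k+1 and w_i = 0 for k+2 ≤ i ≤ n. Consequently G_1 = (G_{r,k} | G_{r,k} wᵀ), i.e. the code C_1 generated by G_1 is the extended code of C_{r,k} with respect to w. -/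
open Finset Matrix

lemma coeff_lagrange_basis {F ι : Type*} [Field F] [DecidableEq ι] {s : Finset ι} {v : ι → F}
    (hvs : Set.InjOn v s) {i : ι} (hi : i ∈ s) :
    (Lagrange.basis s v i).coeff (#s - 1) = Lagrange.nodalWeight s v i := by
  have h1 := Lagrange.natDegree_basis hvs hi
  rw [← h1, Polynomial.coeff_natDegree]
  unfold Lagrange.basis Lagrange.nodalWeight
  rw [Polynomial.leadingCoeff_prod]
  refine Finset.prod_congr rfl fun j hj => ?_
  have hne : v i ≠ v j := fun h => (Finset.mem_erase.mp hj).1 (hvs (Finset.mem_erase.mp hj).2 hi h.symm)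
  unfold Lagrange.basisDivisor
  rw [Polynomial.leadingCoeff_mul, Polynomial.leadingCoeff_C, (Polynomial.monic_X_sub_C (v j)).leadingCoeff, mul_one]

lemma key_sum {F ι : Type*} [Field F] [DecidableEq ι] {s : Finset ι} {v : ι → F}
    (hvs : Set.InjOn v s) (e : ℕ) (he : e < #s) :
    ∑ i ∈ s, Lagrange.nodalWeight s v i * v i ^ e = if e = #s - 1 then 1 else 0 := by
  have h := Lagrange.eq_interpolate (s := s) (f := (Polynomial.X : Polynomial F) ^ e) hvs (by
    rw [Polynomial.degree_X_pow]; exact_mod_cast he)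
  have h2 := congrArg (fun p => Polynomial.coeff p (#s - 1)) h
  simp only [Lagrange.interpolate_apply, Polynomial.finset_sum_coeff, Polynomial.coeff_C_mul,
    Polynomial.eval_pow, Polynomial.eval_X, Polynomial.coeff_X_pow] at h2
  rw [Finset.sum_congr rfl (fun i hi => by rw [coeff_lagrange_basis hvs hi])] at h2
  rw [Finset.sum_congr rfl (fun i _ => mul_comm (v i ^ e) _)] at h2
  rw [← h2]
  by_cases hc : e = #s - 1 <;> simp [hc, eq_comm]

def snocMapL {F : Type*} [Field F] {n : ℕ} (w : Fin n → F) :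
    (Fin n → F) →ₗ[F] (Fin (n + 1) → F) where
  toFun c := Fin.snoc c (∑ i, w i * c i)
  map_add' a b := by
    funext j
    refine Fin.lastCases ?_ (fun j => ?_) j
    · simp [mul_add, Finset.sum_add_distrib]
    · simp
  map_smul' m a := by
    funext j
    refine Fin.lastCases ?_ (fun j => ?_) j
    · simp only [Fin.snoc_last, Pi.smul_apply, smul_eq_mul, Finset.mul_sum]
      exact Finset.sum_congr rfl fun i _ => by rw [RingHom.id_apply]; ring
    · simp

/-- Theorem 4.3: with `w_i = ∏_{1≤j≤k+1, j≠i}(α_i − α_j)⁻¹` for `i ≤ k+1` and `w_i = 0`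
otherwise, `w ≠ 0`, `G_{r,k} wᵀ = (0,…,0,1)ᵀ`, and `C_1` is the extended code of `C_{r,k}`
with respect to `w`. -/
theorem C1_extended_of_Crk {F : Type*} [Field F] [Fintype F] {n : ℕ}
    (α : Fin n → F) (hα : Function.Injective α) (k r : ℕ)
    (hr1 : 1 ≤ r) (hrk : r ≤ k - 1) (hkn : k + 1 ≤ n)
    (w : Fin n → F)
    (hw : w = fun i : Fin n =>
      if (i : ℕ) < k + 1 then
        ∏ j ∈ (Finset.univ.filter fun j : Fin n => (j : ℕ) < k + 1).erase i, (α i - α j)⁻¹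
      else 0) :
    w ≠ 0 ∧
    (Grk α k r).mulVec w = (fun i : Fin k => if (i : ℕ) = k - 1 then 1 else 0) ∧
    (rowSpan (G1 α k r) : Set (Fin (n + 1) → F))
      = extCode (rowSpan (Grk α k r) : Set (Fin n → F)) w := by
  set s : Finset (Fin n) := Finset.univ.filter fun j : Fin n => (j : ℕ) < k + 1 with hs
  have hInj : Set.InjOn α s := fun a _ b _ h => hα h
  have hcard : #s = k + 1 := by
    have himg : s = Finset.image (Fin.castLE hkn) Finset.univ := by
      ext j
      simp only [hs, Finset.mem_filter, Finset.mem_univ, true_and, Finset.mem_image]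
      constructor
      · intro hj; exact ⟨⟨j, hj⟩, Fin.ext rfl⟩
      · rintro ⟨i, rfl⟩; exact i.2
    rw [himg, Finset.card_image_of_injective _ (Fin.castLE_injective hkn),
      Finset.card_univ, Fintype.card_fin]
  have hwm : ∀ i : Fin n, w i = if i ∈ s then Lagrange.nodalWeight s α i else 0 := by
    intro i
    rw [hw]
    simp only [hs, Finset.mem_filter, Finset.mem_univ, true_and]
    rfl
  -- part 2
  have hmul : (Grk α k r).mulVec w = fun i : Fin k => if (i : ℕ) = k - 1 then 1 else 0 := by
    funext i
    have hlt : expo k r i < k + 1 := by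
      have := i.2; unfold expo; split <;> omega
    have hstep : (Grk α k r).mulVec w i
        = ∑ j ∈ s, Lagrange.nodalWeight s α j * α j ^ expo k r i := by
      show ∑ j, Grk α k r i j * w j = _
      rw [← Finset.sum_subset (Finset.subset_univ s)
        (fun j _ hj => by rw [hwm j, if_neg hj, mul_zero])]
      refine Finset.sum_congr rfl fun j hj => ?_
      rw [hwm j, if_pos hj]
      exact mul_comm _ _
    rw [hstep, key_sum hInj _ (by omega), hcard]
    have hiff : (expo k r i = k + 1 - 1) ↔ ((i : ℕ) = k - 1) := by
      have := i.2; unfold expo; split <;> omega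
    by_cases hc : (i : ℕ) = k - 1
    · rw [if_pos (hiff.mpr hc), if_pos hc]
    · rw [if_neg (fun h => hc (hiff.mp h)), if_neg hc]
  -- part 1
  have hn0 : 0 < n := by omega
  have hmem0 : (⟨0, hn0⟩ : Fin n) ∈ s := by simp [hs]
  have hw0 : w ≠ 0 := by
    intro h0
    have h1 : w ⟨0, hn0⟩ = 0 := congrFun h0 _
    rw [hwm, if_pos hmem0] at h1
    exact Lagrange.nodalWeight_ne_zero hInj hmem0 h1
  refine ⟨hw0, hmul, ?_⟩
  -- part 3
  have hrow : ∀ i : Fin k, G1 α k r i = snocMapL w (Grk α k r i) := by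
    intro i
    funext j
    refine Fin.lastCases ?_ (fun j => ?_) j
    · have h1 : G1 α k r i (Fin.last n) = if (i : ℕ) = k - 1 then 1 else 0 := by
        simp [G1]
      have h2 : snocMapL w (Grk α k r i) (Fin.last n) = ∑ j, w j * Grk α k r i j := by
        simp [snocMapL]
      rw [h1, h2, Finset.sum_congr rfl (fun j _ => mul_comm (w j) _)]
      exact (congrFun hmul i).symm
    · have h2 : snocMapL w (Grk α k r i) (Fin.castSucc j) = Grk α k r i j := by
        simp [snocMapL]
      rw [h2]
      simp [G1, Grk, Fin.coe_castSucc, j.2]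
  have hspan : rowSpan (G1 α k r) = Submodule.map (snocMapL w) (rowSpan (Grk α k r)) := by
    unfold rowSpan
    rw [funext hrow,
      show (fun i => (snocMapL w) (Grk α k r i)) = (snocMapL w) ∘ (fun i => Grk α k r i) from rfl,
      Set.range_comp, ← Submodule.map_span]
  rw [hspan]
  ext y
  simp only [SetLike.mem_coe, Submodule.mem_map, extCode, Set.mem_setOf_eq]
  constructor
  · rintro ⟨c, hc, rfl⟩
    exact ⟨c, hc, fun i => by simp [snocMapL], by simp [snocMapL]⟩
  · rintro ⟨c, hc, h1, h2⟩
    refine ⟨c, hc, ?_⟩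
    funext j
    refine Fin.lastCases ?_ (fun j => ?_) j
    · rw [h2]; simp [snocMapL]
    · rw [h1 j]; simp [snocMapL]
end

section
/- Let α_1,…,α_n be pairwise distinct elements of a finite field F_q and let k, r be integers with 1 ≤ r ≤ k−1 and k ≤ n. Then every k×k submatrix of G_1 is nonsingular (equivalently, the code C_1 generated by G_1 is an [n+1,k] MDS code) if and only if both of the following hold: (∗) σ_r(α_{i_1},…,α_{i_k}) ≠ 0 for every k-element subset {i_1,…,i_k} of {1,…,n}, and (∗∗) σ_{r−1}(α_{i_1},…,α_{i_{k−1}}) ≠ 0 for every (k−1)-element subset {i_1,…,i_{k−1}} of {1,…,n}. -/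
open Finset Matrix

lemma Ioi_castSucc' {k : ℕ} (i : Fin k) :
    Finset.Ioi (Fin.castSucc i) = insert (Fin.last k) ((Finset.Ioi i).map Fin.castSuccEmb) := by
  ext j
  constructor
  · intro h
    rw [Finset.mem_Ioi] at h
    rcases Fin.eq_castSucc_or_eq_last j with ⟨j', rfl⟩ | rfl
    · exact Finset.mem_insert_of_mem (Finset.mem_map_of_mem _ (by
        rw [Finset.mem_Ioi]; exact (Fin.castSucc_lt_castSucc_iff).mp h))
    · exact Finset.mem_insert_self _ _
  · intro h
    rw [Finset.mem_Ioi]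
    rcases Finset.mem_insert.mp h with rfl | h
    · exact Fin.castSucc_lt_last i
    · obtain ⟨j', hj', rfl⟩ := Finset.mem_map.mp h
      exact Fin.castSucc_lt_castSucc_iff.mpr (Finset.mem_Ioi.mp hj')

lemma last_not_mem_map {k : ℕ} (s : Finset (Fin k)) :
    Fin.last k ∉ s.map Fin.castSuccEmb := by
  intro h
  obtain ⟨j', _, hj'⟩ := Finset.mem_map.mp h
  exact absurd hj' (Fin.ne_of_lt (Fin.castSucc_lt_last j'))

lemma vand_snoc {R : Type*} [CommRing R] {k : ℕ} (f : Fin k → R) (x : R) :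
    vand (Fin.snoc f x : Fin (k+1) → R) = vand f * ∏ i : Fin k, (x - f i) := by
  unfold vand
  rw [Fin.prod_univ_castSucc]
  have hlast : (∏ j ∈ Finset.Ioi (Fin.last k),
      ((Fin.snoc f x : Fin (k+1) → R) j - (Fin.snoc f x : Fin (k+1) → R) (Fin.last k))) = 1 := by
    rw [show Finset.Ioi (Fin.last k) = ∅ by ext j; simp [Fin.le_last j, not_lt.mpr]]
    simp
  rw [hlast, mul_one]
  rw [← Finset.prod_mul_distrib]
  refine Finset.prod_congr rfl fun i _ => ?_
  rw [Ioi_castSucc', Finset.prod_insert (last_not_mem_map _), Finset.prod_map]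
  have h1 : ∀ j : Fin k, (Fin.snoc f x : Fin (k+1) → R) (Fin.castSuccEmb j) = f j :=
    fun j => by rw [show (Fin.castSuccEmb j : Fin (k+1)) = Fin.castSucc j from rfl, Fin.snoc_castSucc]
  simp only [h1, Fin.snoc_last, Fin.snoc_castSucc]
  exact mul_comm _ _

lemma val_succAbove' {k : ℕ} (p : Fin (k+1)) (i : Fin k) :
    ((p.succAbove i : Fin (k+1)) : ℕ) = if (i:ℕ) < (p:ℕ) then (i:ℕ) else (i:ℕ)+1 := by
  rw [Fin.succAbove]
  split_ifs with h1 h2 h2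
  · rfl
  · exact absurd h1 (by simpa [Fin.lt_def] using h2)
  · exact absurd (by simpa [Fin.lt_def] using h2) h1
  · rfl

lemma det_expo {F : Type*} [Field F] {k : ℕ} (r : ℕ) (hrk : r ≤ k) (β : Fin k → F) :
    (Matrix.of fun i j : Fin k => β j ^ expo k r i).det = vand β * esymmV r β := by
  classical
  set v : Fin (k+1) → Polynomial F := Fin.snoc (fun i => Polynomial.C (β i)) Polynomial.X with hv
  have hvc : ∀ i : Fin k, v (Fin.castSucc i) = Polynomial.C (β i) := fun i => by
    simp [hv]
  have hvl : v (Fin.last k) = Polynomial.X := by simp [hv]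
  -- the product form
  have hdet : (Matrix.vandermonde v).det
      = Polynomial.C (vand β) * ∏ i : Fin k, (Polynomial.X - Polynomial.C (β i)) := by
    rw [Matrix.det_vandermonde]
    have h1 := vand_snoc (fun i => (Polynomial.C (β i) : Polynomial F)) (Polynomial.X : Polynomial F)
    unfold vand at h1 ⊢
    rw [h1]
    congr 1
    simp only [map_prod, map_sub]
  -- cofactor expansion along last row
  set D : Fin (k+1) → Matrix (Fin k) (Fin k) F :=
    fun p => Matrix.of fun i' j' : Fin k => β i' ^ ((p.succAbove j' : Fin (k+1)) : ℕ) with hD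
  have hexp : (Matrix.vandermonde v).det
      = ∑ p : Fin (k+1), (-1 : Polynomial F) ^ (k + (p:ℕ)) * Polynomial.X ^ (p:ℕ)
          * Polynomial.C ((D p).det) := by
    rw [Matrix.det_succ_row (Matrix.vandermonde v) (Fin.last k)]
    refine Finset.sum_congr rfl fun p _ => ?_
    have hsub : (Matrix.vandermonde v).submatrix (Fin.last k).succAbove p.succAbove
        = (D p).map Polynomial.C := by
      ext i' j'
      simp only [Matrix.submatrix_apply, Matrix.vandermonde_apply, Matrix.map_apply, hD,
        Matrix.of_apply, Fin.succAbove_last, hvc, map_pow]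
    rw [hsub, show ((D p).map ⇑Polynomial.C).det = Polynomial.C ((D p).det) from
      (RingHom.map_det Polynomial.C (D p)).symm]
    have : Matrix.vandermonde v (Fin.last k) p = Polynomial.X ^ (p : ℕ) := by
      simp [Matrix.vandermonde_apply, hvl]
    rw [this, Fin.val_last]
  -- take coefficient k - r on both sides
  have hco := congrArg (fun q => Polynomial.coeff q (k - r)) (hexp.symm.trans hdet)
  simp only [Polynomial.finset_sum_coeff] at hco
  have hterm : ∀ p : Fin (k+1),
      ((-1 : Polynomial F) ^ (k + (p:ℕ)) * Polynomial.X ^ (p:ℕ)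
        * Polynomial.C ((D p).det)).coeff (k - r)
      = if (p : ℕ) = k - r then (-1 : F) ^ (k + (p:ℕ)) * (D p).det else 0 := by
    intro p
    have : (-1 : Polynomial F) ^ (k + (p:ℕ)) * Polynomial.X ^ (p:ℕ) * Polynomial.C ((D p).det)
        = Polynomial.C ((-1 : F) ^ (k + (p:ℕ)) * (D p).det) * Polynomial.X ^ (p:ℕ) := by
      rw [Polynomial.C_mul, Polynomial.C_pow, Polynomial.C_neg, Polynomial.C_1]
      ring
    rw [this, Polynomial.coeff_C_mul, Polynomial.coeff_X_pow]
    by_cases h : (p:ℕ) = k - r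
    · simp [h]
    · simp [h, Ne.symm h]
  simp only [hterm] at hco
  have hkr : k - r < k + 1 := by omega
  have hsum : ∑ p : Fin (k+1), (if (p : ℕ) = k - r then (-1 : F) ^ (k + (p:ℕ)) * (D p).det else 0)
      = (-1 : F) ^ (k + (k - r)) * (D ⟨k - r, hkr⟩).det := by
    rw [Finset.sum_eq_single (⟨k - r, hkr⟩ : Fin (k+1))]
    · simp
    · intro b _ hb; rw [if_neg (fun h => hb (Fin.ext h))]
    · intro h; exact absurd (Finset.mem_univ _) h
  rw [hsum] at hco
  have hR : (Polynomial.C (vand β) * ∏ i : Fin k, (Polynomial.X - Polynomial.C (β i))).coeff (k - r)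
      = vand β * ((-1 : F) ^ r * esymmV r β) := by
    rw [Polynomial.coeff_C_mul]
    congr 1
    have hmul : (∏ i : Fin k, (Polynomial.X - Polynomial.C (β i)))
        = ((Finset.univ.val.map β).map fun t => Polynomial.X - Polynomial.C t).prod := by
      rw [Multiset.map_map]
      rfl
    have hcard : Multiset.card (Finset.univ.val.map β) = k := by simp
    rw [hmul, Multiset.prod_X_sub_C_coeff _ (by rw [hcard]; omega), hcard,
      show k - (k - r) = r by omega]
    congr 1
    rw [Finset.esymm_map_val]
    rfl
  rw [hR] at hco
  have hDt : (D ⟨k - r, hkr⟩) = (Matrix.of fun i j : Fin k => β j ^ expo k r i)ᵀ := by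
    ext i' j'
    simp only [hD, Matrix.of_apply, Matrix.transpose_apply, val_succAbove', expo]
  rw [hDt, Matrix.det_transpose] at hco
  have hsign : ((-1 : F)) ^ (k + (k - r)) = (-1 : F) ^ r := by
    have h2 : k + (k - r) = 2 * (k - r) + r := by omega
    rw [h2, pow_add, pow_mul]
    simp
  rw [hsign] at hco
  have hne : ((-1 : F)) ^ r ≠ 0 := by
    simp [pow_ne_zero]
  exact mul_left_cancel₀ hne (by rw [hco]; ring)

lemma vand_ne_zero {F : Type*} [Field F] {m : ℕ} {β : Fin m → F}
    (h : Function.Injective β) : vand β ≠ 0 := by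
  unfold vand
  rw [Finset.prod_ne_zero_iff]
  intro i _
  rw [Finset.prod_ne_zero_iff]
  intro j hj
  exact sub_ne_zero.mpr fun e => (Finset.mem_Ioi.mp hj).ne' (h e)

lemma detB {F : Type*} [Field F] {n m : ℕ} (α : Fin n → F)
    (r : ℕ) (hr1 : 1 ≤ r) (hrm : r ≤ m)
    (c : Fin (m+1) → Fin (n+1)) (hc : Function.Injective c) (j0 : Fin (m+1))
    (hj0 : (c j0 : ℕ) = n) (β : Fin m → Fin n)
    (hβ : ∀ j', ((β j' : ℕ)) = (c (j0.succAbove j') : ℕ)) :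
    ((G1 α (m+1) r).submatrix id c).det
      = (-1 : F) ^ (m + (j0:ℕ)) * (vand (α ∘ β) * esymmV (r-1) (α ∘ β)) := by
  classical
  set M := (G1 α (m+1) r).submatrix id c with hM
  have hMcol : ∀ i : Fin (m+1), M i j0 = if (i : ℕ) = m then 1 else 0 := by
    intro i
    simp only [hM, Matrix.submatrix_apply, id, G1, Matrix.of_apply]
    rw [dif_neg (by omega)]
    rfl
  have hMoff : ∀ (i : Fin (m+1)) (j : Fin (m+1)), j ≠ j0 →
      ∃ h : (c j : ℕ) < n, M i j = α ⟨(c j : ℕ), h⟩ ^ expo (m+1) r i := by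
    intro i j hj
    have hne : c j ≠ c j0 := fun e => hj (hc e)
    have hlt : (c j : ℕ) < n := by
      have h1 := (c j).isLt
      have h2 : (c j : ℕ) ≠ n := fun e => hne (Fin.ext (by rw [e, hj0]))
      omega
    exact ⟨hlt, by simp only [hM, Matrix.submatrix_apply, id, G1, Matrix.of_apply, dif_pos hlt]⟩
  rw [Matrix.det_succ_column M j0]
  rw [Finset.sum_eq_single (Fin.last m)]
  · rw [hMcol, if_pos (by simp), mul_one, Fin.val_last]
    congr 1
    have hsub : M.submatrix (Fin.last m).succAbove j0.succAbove
        = Matrix.of fun i' j' : Fin m => (α ∘ β) j' ^ expo m (r-1) i' := by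
      ext i' j'
      obtain ⟨hlt, he⟩ := hMoff ((Fin.last m).succAbove i') (j0.succAbove j')
        (Fin.succAbove_ne j0 j')
      simp only [Matrix.submatrix_apply, Matrix.of_apply]
      rw [he]
      congr 1
      · congr 1
        exact Fin.ext (hβ j').symm
      · rw [Fin.succAbove_last]
        simp only [expo, Fin.coe_castSucc]
        have : m + 1 - r = m - (r - 1) := by omega
        rw [this]
    rw [hsub, det_expo (r-1) (by omega)]
  · intro i _ hi
    rw [hMcol, if_neg (fun e => hi (Fin.ext (by rw [e, Fin.val_last]))), mul_zero, zero_mul]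
  · intro h
    exact absurd (Finset.mem_univ _) h

lemma detA {F : Type*} [Field F] {n k : ℕ} (α : Fin n → F) (r : ℕ)
    (c : Fin k → Fin (n+1)) (hall : ∀ j, (c j : ℕ) < n)
    (β : Fin k → Fin n) (hβ : ∀ j, (β j : ℕ) = (c j : ℕ)) (hrk : r ≤ k) :
    ((G1 α k r).submatrix id c).det = vand (α ∘ β) * esymmV r (α ∘ β) := by
  have hsub : (G1 α k r).submatrix id c = Matrix.of fun i j => (α ∘ β) j ^ expo k r i := by
    ext i j
    simp only [Matrix.submatrix_apply, id, G1, Matrix.of_apply, dif_pos (hall j)]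
    have : (⟨(c j : ℕ), hall j⟩ : Fin n) = β j := Fin.ext (hβ j).symm
    rw [this]
    rfl
  rw [hsub, det_expo r hrk]

/-- Theorem 4.4: `C_1` is MDS (every `k×k` submatrix of `G_1` is nonsingular) iff
`(∗)` `σ_r ≠ 0` on every `k`-element subset and `(∗∗)` `σ_{r−1} ≠ 0` on every
`(k−1)`-element subset of `{α_1,…,α_n}`. -/
theorem C1_MDS_iff {F : Type*} [Field F] [Fintype F] {n : ℕ}
    (α : Fin n → F) (hα : Function.Injective α) (k r : ℕ)
    (hr1 : 1 ≤ r) (hrk : r ≤ k - 1) (hkn : k ≤ n) :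
    allSubNonsing (G1 α k r) ↔
      ((∀ c : Fin k → Fin n, Function.Injective c → esymmV r (α ∘ c) ≠ 0) ∧
       (∀ c : Fin (k - 1) → Fin n, Function.Injective c → esymmV (r - 1) (α ∘ c) ≠ 0)) := by
  obtain ⟨m, rfl⟩ : ∃ m, k = m + 1 := ⟨k - 1, by omega⟩
  have hrm : r ≤ m := by omega
  constructor
  · intro H
    refine ⟨?_, ?_⟩
    · intro c hc
      have hcol : Function.Injective fun j => Fin.castSucc (c j) :=
        fun a b h => hc (Fin.castSucc_injective n h)
      have hd := H _ hcol
      rw [detA α r _ (fun j => by simpa using (c j).isLt) c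
        (fun j => (Fin.coe_castSucc (c j)).symm) (by omega)] at hd
      exact fun h0 => hd (by rw [h0, mul_zero])
    · intro c hc
      set Cc : Fin (m+1) → Fin (n+1) := Fin.snoc (fun j => (c j).castSucc) (Fin.last n) with hCc
      have hCv : ∀ j : Fin m, Cc (Fin.castSucc j) = (c j).castSucc := fun j => by simp [hCc]
      have hCl : Cc (Fin.last m) = Fin.last n := by simp [hCc]
      have hCinj : Function.Injective Cc := by
        intro a b h
        rcases Fin.eq_castSucc_or_eq_last a with ⟨a', rfl⟩ | rfl <;>
          rcases Fin.eq_castSucc_or_eq_last b with ⟨b', rfl⟩ | rfl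
        · rw [hCv, hCv] at h
          exact congrArg Fin.castSucc (hc (Fin.castSucc_injective n h))
        · rw [hCv, hCl] at h
          have := congrArg Fin.val h
          simp only [Fin.coe_castSucc, Fin.val_last] at this
          exact absurd this (c a').isLt.ne
        · rw [hCv, hCl] at h
          have := congrArg Fin.val h
          simp only [Fin.coe_castSucc, Fin.val_last] at this
          exact absurd this.symm (c b').isLt.ne
        · rfl
      have hd := H Cc hCinj
      rw [detB α r hr1 hrm Cc hCinj (Fin.last m)
        (by rw [hCl]; rfl) c
        (fun j' => by rw [Fin.succAbove_last, hCv]; rfl)] at hd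
      exact fun h0 => hd (by rw [h0, mul_zero, mul_zero])
  · rintro ⟨h1, h2⟩ c hc
    by_cases hall : ∀ j, (c j : ℕ) < n
    · set c' : Fin (m+1) → Fin n := fun j => ⟨c j, hall j⟩ with hc'd
      have hc'i : Function.Injective c' := fun a b h => by
        have hv := congrArg Fin.val h
        exact hc (Fin.ext hv)
      rw [detA α r c hall c' (fun j => rfl) (by omega)]
      exact mul_ne_zero (vand_ne_zero (hα.comp hc'i)) (h1 c' hc'i)
    · push_neg at hall
      obtain ⟨j0, hj0⟩ := hall
      have hj0' : (c j0 : ℕ) = n := by have := (c j0).isLt; omega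
      have hlt : ∀ j', (c (j0.succAbove j') : ℕ) < n := by
        intro j'
        have hne : c (j0.succAbove j') ≠ c j0 := fun e => Fin.succAbove_ne j0 j' (hc e)
        have h2' : (c (j0.succAbove j') : ℕ) ≠ n := fun e => hne (Fin.ext (by rw [e, hj0']))
        have := (c (j0.succAbove j')).isLt
        omega
      set β : Fin m → Fin n := fun j' => ⟨c (j0.succAbove j'), hlt j'⟩ with hβd
      have hβi : Function.Injective β := by
        intro a b h
        have hv := congrArg Fin.val h
        have e : c (j0.succAbove a) = c (j0.succAbove b) := Fin.ext hv
        exact Fin.succAbove_right_injective (hc e)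
      rw [detB α r hr1 hrm c hc j0 hj0' β (fun j' => rfl)]
      exact mul_ne_zero (pow_ne_zero _ (neg_ne_zero.mpr one_ne_zero))
        (mul_ne_zero (vand_ne_zero (hα.comp hβi)) (h2 β hβi))
end

section
/- Let α_1,…,α_n be pairwise distinct elements of a finite field F_q and let k, r be integers with 6 ≤ 2k ≤ n and 1 ≤ r ≤ k−1. Assume that σ_r(α_{i_1},…,α_{i_k}) ≠ 0 for every k-element subset of {1,…,n} and σ_{r−1}(α_{i_1},…,α_{i_{k−1}}) ≠ 0 for every (k−1)-element subset of {1,…,n} (so that both C_{r,k} and C_1 are MDS). Let w ∈ F_q^n be the vector with w_i = ∏_{1≤j≤k+1, j≠i}(α_i − α_j)^{-1} for 1 ≤ i ≤ k+1 and w_i = 0 for k+2 ≤ i ≤ n. Then the covering radius of the dual code C_{r,k}^⊥ equals k, and w is a deep hole of C_{r,k}^⊥. -/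
open Finset Matrix

/-- The Hamming distance from `x` to the code `C`. -/
noncomputable def distTo {F : Type*} [Field F] [DecidableEq F] {m : ℕ}
    (C : Set (Fin m → F)) (x : Fin m → F) : ℕ :=
  sInf {d | ∃ c ∈ C, hammingDist x c = d}

/-- The covering radius of the code `C`. -/
noncomputable def covRad {F : Type*} [Field F] [DecidableEq F] {m : ℕ}
    (C : Set (Fin m → F)) : ℕ :=
  sSup (Set.range (distTo C))

/-!
Every `x` is within distance `k` of `C_{r,k}^⊥`: the syndrome map `x ↦ G_{r,k} x` is already
onto on vectors supported on `k` fixed coordinates, since a vector `c` orthogonal to `β^e` for all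
`e ≤ m` except `e = a` is also orthogonal to `β^a` (pair with the coefficients of the nodal
polynomial, whose `a`-th coefficient is `±σ_{m-a}(β) ≠ 0`) and then vanishes by Vandermonde.
Conversely, `w` consists of Lagrange weights, so `∑ w_j α_j^e = [e = k]` for `e ≤ k`. If a dual
word `z` had `d(w, z) < k`, then `w - z` would live on `k - 1` points and be orthogonal to `α^e`
for all `e ≤ k - 1` except `e = k - r`; since `σ_{r-1} ≠ 0` there, `w = z`, contradicting
`∑ w_j α_j^k = 1`.
-/

open Polynomial Function

section Codes

variable {F : Type*} [Field F]

lemma mem_dualSet_rowSpan_iff {k m : ℕ} (G : Matrix (Fin k) (Fin m) F) (x : Fin m → F) :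
    x ∈ dualSet (rowSpan G : Set (Fin m → F)) ↔ G *ᵥ x = 0 := by
  have hker : x ∈ dualSet (rowSpan G : Set (Fin m → F))
      ↔ rowSpan G ≤ LinearMap.ker (dotProductBilin F F x) := by
    simp [dualSet, SetLike.le_def, dotProduct]
  rw [hker, rowSpan, Submodule.span_le, Set.range_subset_iff, funext_iff]
  simp [Matrix.mulVec, dotProduct_comm]

lemma exists_embedding_support_subset_range {M : Type*} [Zero M] [DecidableEq M] {n m : ℕ}
    {y : Fin n → M} (hy : hammingNorm y ≤ m) (hmn : m ≤ n) :
    ∃ c : Fin m ↪ Fin n, ∀ j ∉ Set.range c, y j = 0 := by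
  obtain ⟨T, hyT, -, hT⟩ :=
    exists_subsuperset_card_eq (subset_univ {j | y j ≠ 0}) hy (by simpa using hmn)
  refine ⟨(T.orderEmbOfFin hT).toEmbedding, fun j hj => ?_⟩
  by_contra hyj
  exact hj (by simpa [range_orderEmbOfFin] using hyT (by simpa using hyj))

lemma exists_mem_dualSet_rowSpan_hammingDist_le [DecidableEq F] {k m : ℕ}
    (G : Matrix (Fin k) (Fin m) F) (c : Fin k ↪ Fin m) (hG : IsUnit (G.submatrix id c))
    (x : Fin m → F) :
    ∃ z ∈ dualSet (rowSpan G : Set (Fin m → F)), hammingDist x z ≤ k := by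
  obtain ⟨y', hy'⟩ := Matrix.mulVec_surjective_iff_isUnit.mpr hG (G *ᵥ x)
  -- spread `y'` over the columns `c`: it then has the same syndrome as `x`
  set y : Fin m → F := extend c y' 0
  have hGy : G *ᵥ y = G *ᵥ x := by
    rw [← hy']
    ext i
    refine (Fintype.sum_of_injective c c.injective _ _ (fun j hj => ?_) fun l => ?_).symm
    · simp [y, extend_apply' _ _ _ hj]
    · simp [y, c.injective.extend_apply]
  refine ⟨x - y, by simp [mem_dualSet_rowSpan_iff, Matrix.mulVec_sub, hGy], ?_⟩
  calc hammingDist x (x - y) = hammingNorm y := by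
        rw [hammingDist_comm, hammingDist_eq_hammingNorm, neg_sub, sub_add_cancel]
    _ ≤ #(univ.map c) := card_le_card fun j hj => by
        by_contra hjc
        simp only [mem_map, mem_univ, true_and, not_exists] at hjc
        simp [y, extend_apply' _ _ _ (not_exists.mpr hjc)] at hj
    _ = k := by simp

end Codes

section GapVandermonde

variable {F : Type*} [Field F]

lemma coeff_nodal_univ {m e : ℕ} (β : Fin m → F) (he : e ≤ m) :
    (Lagrange.nodal univ β).coeff e = (-1) ^ (m - e) * esymmV (m - e) β := by
  have hmap : (univ.val.map fun i => X - C (β i))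
      = (univ.val.map β).map fun t => X - C t := by
    rw [Multiset.map_map]; rfl
  rw [Lagrange.nodal_eq, prod_eq_multiset_prod, hmap, Multiset.prod_X_sub_C_coeff _ (by simpa),
    esymmV, ← esymm_map_val]
  simp

lemma eq_zero_of_forall_sum_mul_pow_eq_zero_of_ne {m a : ℕ} {β : Fin m → F}
    (hβ : Injective β) (ha : a ≤ m) (hσ : esymmV (m - a) β ≠ 0) {c : Fin m → F}
    (hc : ∀ e ≤ m, e ≠ a → ∑ i, c i * β i ^ e = 0) : c = 0 := by
  set p := Lagrange.nodal univ β
  have hp : p.natDegree < m + 1 := by simp [p, Lagrange.natDegree_nodal]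
  have hpc : ∑ e ∈ range (m + 1), p.coeff e * ∑ i, c i * β i ^ e = 0 := calc
    _ = ∑ i, c i * p.eval (β i) := by
      simp_rw [eval_eq_sum_range' hp, mul_sum]
      rw [sum_comm]
      exact sum_congr rfl fun _ _ => sum_congr rfl fun _ _ => by ring
    _ = 0 := by simp [p, Lagrange.eval_nodal_at_node]
  have hca : ∑ i, c i * β i ^ a = 0 := by
    rw [sum_eq_single_of_mem a (mem_range.mpr (by omega))
      fun e he hne => by rw [hc e (Nat.lt_succ_iff.mp (mem_range.mp he)) hne, mul_zero]] at hpc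
    refine (mul_eq_zero.mp hpc).resolve_left ?_
    rw [coeff_nodal_univ β ha]
    exact mul_ne_zero (pow_ne_zero _ (neg_ne_zero.mpr one_ne_zero)) hσ
  refine Matrix.eq_zero_of_forall_pow_sum_mul_pow_eq_zero hβ fun e => ?_
  rcases eq_or_ne (e : ℕ) a with h | h
  · rw [h]; exact hca
  · exact hc e e.is_lt.le h

lemma eq_zero_of_hammingNorm_le_of_sum_mul_pow_eq_zero [DecidableEq F] {n : ℕ}
    {α : Fin n → F} (hα : Injective α) {m a : ℕ} (ha : a ≤ m) (hmn : m ≤ n)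
    (hσ : ∀ c : Fin m → Fin n, Injective c → esymmV (m - a) (α ∘ c) ≠ 0) {y : Fin n → F}
    (hy : hammingNorm y ≤ m) (hsyn : ∀ e ≤ m, e ≠ a → ∑ j, y j * α j ^ e = 0) :
    y = 0 := by
  obtain ⟨c, hc⟩ := exists_embedding_support_subset_range hy hmn
  have hsum : ∀ e, ∑ i, y (c i) * α (c i) ^ e = ∑ j, y j * α j ^ e := fun e =>
    Fintype.sum_of_injective c c.injective _ _ (fun j hj => by rw [hc j hj, zero_mul])
      fun _ => rfl
  have hyc : y ∘ c = 0 :=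
    eq_zero_of_forall_sum_mul_pow_eq_zero_of_ne (hα.comp c.injective) ha (hσ c c.injective)
      fun e he hne => (hsum e).trans (hsyn e he hne)
  funext j
  by_cases hj : j ∈ Set.range c
  · obtain ⟨i, rfl⟩ := hj
    exact congrFun hyc i
  · exact hc j hj

end GapVandermonde

lemma sum_pow_div_prod_sub {F ι : Type*} [Field F] [DecidableEq ι] {s : Finset ι} {v : ι → F}
    (hvs : Set.InjOn v s) {k e : ℕ} (hs : #s = k + 1) (he : e ≤ k) :
    ∑ i ∈ s, v i ^ e / ∏ j ∈ s.erase i, (v i - v j) = if e = k then 1 else 0 := by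
  have hdeg : (X ^ e : F[X]).degree < #s := by
    rw [degree_X_pow, hs]; exact_mod_cast Nat.lt_succ_of_le he
  have := Lagrange.coeff_eq_sum hvs hdeg
  simpa [hs, coeff_X_pow, eq_comm] using this.symm

section Grk

variable {F : Type*} [Field F] {n : ℕ}

lemma sum_lagrangeWeight_mul_pow {α : Fin n → F} (hα : Injective α) {k e : ℕ}
    (hkn : k + 1 ≤ n) (he : e ≤ k) :
    ∑ j : Fin n, (if (j : ℕ) < k + 1 then
        ∏ i ∈ (univ.filter fun i : Fin n => (i : ℕ) < k + 1).erase j, (α j - α i)⁻¹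
      else 0) * α j ^ e = if e = k then 1 else 0 := by
  have hs : #(univ.filter fun i : Fin n => (i : ℕ) < k + 1) = k + 1 := by
    rw [Fin.card_filter_val_lt]; omega
  rw [← sum_pow_div_prod_sub hα.injOn hs he, sum_filter]
  refine sum_congr rfl fun j _ => ?_
  split_ifs <;> simp [prod_inv_distrib, div_eq_mul_inv, mul_comm]

lemma exists_expo_eq {k r e : ℕ} (he : e ≤ k) (hne : e ≠ k - r) :
    ∃ i : Fin k, expo k r i = e := by
  by_cases h : e < k - r
  · exact ⟨⟨e, by omega⟩, by simp [expo, h]⟩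
  · exact ⟨⟨e - 1, by omega⟩, by simp only [expo]; split_ifs <;> omega⟩

lemma sum_mul_pow_eq_zero_of_mem_dualSet {α : Fin n → F} {k r e : ℕ} {z : Fin n → F}
    (hz : z ∈ dualSet (rowSpan (Grk α k r) : Set (Fin n → F))) (he : e ≤ k)
    (hne : e ≠ k - r) : ∑ j, z j * α j ^ e = 0 := by
  obtain ⟨i, rfl⟩ := exists_expo_eq he hne
  have := congrFun ((mem_dualSet_rowSpan_iff _ z).mp hz) i
  simpa [Matrix.mulVec, dotProduct, Grk, mul_comm] using this

lemma isUnit_submatrix_Grk {α : Fin n → F} (hα : Injective α) {k r : ℕ} (hrk : r ≤ k)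
    {c : Fin k → Fin n} (hc : Injective c) (hσ : esymmV r (α ∘ c) ≠ 0) :
    IsUnit ((Grk α k r).submatrix id c) := by
  refine (Matrix.isUnit_iff_isUnit_det _).mpr (isUnit_iff_ne_zero.mpr fun hdet => ?_)
  obtain ⟨v, hv0, hv⟩ := Matrix.exists_mulVec_eq_zero_iff.mpr hdet
  refine hv0 (eq_zero_of_forall_sum_mul_pow_eq_zero_of_ne (hα.comp hc) (a := k - r)
    (by omega) (by rwa [Nat.sub_sub_self hrk]) fun e he hne => ?_)
  obtain ⟨i, rfl⟩ := exists_expo_eq he hne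
  simpa [Matrix.mulVec, dotProduct, Grk, mul_comm] using congrFun hv i

lemma le_hammingDist_of_mem_dualSet [DecidableEq F] {α : Fin n → F} (hα : Injective α)
    {k r : ℕ} (hr1 : 1 ≤ r) (hrk : r ≤ k - 1) (hkn : k ≤ n)
    (hσ : ∀ c : Fin (k - 1) → Fin n, Injective c → esymmV (r - 1) (α ∘ c) ≠ 0)
    {x : Fin n → F} (hx : ∀ e ≤ k, ∑ j, x j * α j ^ e = if e = k then 1 else 0)
    {z : Fin n → F} (hz : z ∈ dualSet (rowSpan (Grk α k r) : Set (Fin n → F))) :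
    k ≤ hammingDist x z := by
  by_contra! hlt
  have hsyn : ∀ e ≤ k, e ≠ k - r →
      ∑ j, (x - z) j * α j ^ e = if e = k then 1 else 0 := by
    intro e he hne
    simp only [Pi.sub_apply, sub_mul, sum_sub_distrib, hx e he,
      sum_mul_pow_eq_zero_of_mem_dualSet hz he hne, sub_zero]
  have hxz : x - z = 0 := by
    refine eq_zero_of_hammingNorm_le_of_sum_mul_pow_eq_zero hα (m := k - 1) (a := k - r)
      (by omega) (by omega) (by rwa [show k - 1 - (k - r) = r - 1 by omega]) ?_
      fun e he hne => by rw [hsyn e (by omega) hne, if_neg (by omega)]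
    rw [hammingDist_comm, hammingDist_eq_hammingNorm, neg_add_eq_sub] at hlt
    omega
  simpa [sub_eq_zero.mp hxz] using hsyn k le_rfl (by omega)

end Grk

section CoveringRadius

variable {F : Type*} [Field F] [DecidableEq F] {m : ℕ} {C : Set (Fin m → F)}

lemma distTo_le_hammingDist {c : Fin m → F} (hc : c ∈ C) (x : Fin m → F) :
    distTo C x ≤ hammingDist x c :=
  Nat.sInf_le ⟨c, hc, rfl⟩

lemma le_distTo (hC : C.Nonempty) {x : Fin m → F} {d : ℕ}
    (h : ∀ c ∈ C, d ≤ hammingDist x c) : d ≤ distTo C x := by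
  obtain ⟨c, hc⟩ := hC
  exact le_csInf ⟨_, c, hc, rfl⟩ (by rintro _ ⟨c, hc, rfl⟩; exact h c hc)

lemma covRad_eq_of_forall_distTo_le {ρ : ℕ} {w : Fin m → F} (h : ∀ x, distTo C x ≤ ρ)
    (hw : distTo C w = ρ) : covRad C = ρ := by
  have hbdd : ∀ d ∈ Set.range (distTo C), d ≤ ρ := by
    rintro _ ⟨x, rfl⟩
    exact h x
  exact le_antisymm (csSup_le ⟨_, w, rfl⟩ hbdd) (hw ▸ le_csSup ⟨ρ, hbdd⟩ ⟨w, rfl⟩)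

end CoveringRadius

theorem covRad_dual_Crk_general {F : Type*} [Field F] [DecidableEq F] {n : ℕ}
    (α : Fin n → F) (hα : Function.Injective α) (k r : ℕ)
    (hkn : 2 * k ≤ n) (hr1 : 1 ≤ r) (hrk : r ≤ k - 1)
    (hstar : ∀ c : Fin k → Fin n, Function.Injective c → esymmV r (α ∘ c) ≠ 0)
    (hstarstar : ∀ c : Fin (k - 1) → Fin n, Function.Injective c → esymmV (r - 1) (α ∘ c) ≠ 0)
    (w : Fin n → F)
    (hw : w = fun i : Fin n =>
      if (i : ℕ) < k + 1 then
        ∏ j ∈ (Finset.univ.filter fun j : Fin n => (j : ℕ) < k + 1).erase i, (α i - α j)⁻¹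
      else 0) :
    covRad (dualSet (rowSpan (Grk α k r) : Set (Fin n → F))) = k ∧
    distTo (dualSet (rowSpan (Grk α k r) : Set (Fin n → F))) w
      = covRad (dualSet (rowSpan (Grk α k r) : Set (Fin n → F))) := by
  set C := dualSet (rowSpan (Grk α k r) : Set (Fin n → F))
  have hdist_le : ∀ x, distTo C x ≤ k := fun x => by
    let c := Fin.castLEEmb (show k ≤ n by omega)
    obtain ⟨z, hz, hxz⟩ := exists_mem_dualSet_rowSpan_hammingDist_le _ c
      (isUnit_submatrix_Grk hα (by omega) c.injective (hstar c c.injective)) x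
    exact (distTo_le_hammingDist hz x).trans hxz
  have hdist_w : distTo C w = k := by
    refine le_antisymm (hdist_le w) (le_distTo ⟨0, fun c _ => by simp⟩ fun z hz => ?_)
    refine le_hammingDist_of_mem_dualSet hα hr1 hrk (by omega) hstarstar (fun e he => ?_) hz
    rw [hw]
    exact sum_lagrangeWeight_mul_pow hα (by omega) he
  have hcov := covRad_eq_of_forall_distTo_le hdist_le hdist_w
  exact ⟨hcov, hdist_w.trans hcov.symm⟩

/-- Corollary 4.10: if `C_{r,k}` and `C_1` are MDS, then the covering radius of
`C_{r,k}^⊥` is `k` and the vector `w` from the extension is a deep hole of `C_{r,k}^⊥`. -/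
theorem covRad_dual_Crk {F : Type*} [Field F] [Fintype F] [DecidableEq F] {n : ℕ}
    (α : Fin n → F) (hα : Function.Injective α) (k r : ℕ)
    (h6 : 6 ≤ 2 * k) (hkn : 2 * k ≤ n) (hr1 : 1 ≤ r) (hrk : r ≤ k - 1)
    (hstar : ∀ c : Fin k → Fin n, Function.Injective c → esymmV r (α ∘ c) ≠ 0)
    (hstarstar : ∀ c : Fin (k - 1) → Fin n, Function.Injective c → esymmV (r - 1) (α ∘ c) ≠ 0)
    (w : Fin n → F)
    (hw : w = fun i : Fin n =>
      if (i : ℕ) < k + 1 then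
        ∏ j ∈ (Finset.univ.filter fun j : Fin n => (j : ℕ) < k + 1).erase i, (α i - α j)⁻¹
      else 0) :
    covRad (dualSet (rowSpan (Grk α k r) : Set (Fin n → F))) = k ∧
    distTo (dualSet (rowSpan (Grk α k r) : Set (Fin n → F))) w
      = covRad (dualSet (rowSpan (Grk α k r) : Set (Fin n → F))) :=
  covRad_dual_Crk_general α hα k r hkn hr1 hrk hstar hstarstar w hw
end
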